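/- Let X be a hereditary class of graphs all of whose members are bipartite permutation graphs. Then the path number (the number of vertices of a longest, not necessarily induced, path) is unbounded on X while bounded on every proper hereditary subclass of X if and only if X is either the class of all complete bipartite graphs K_{a,b} (a, b ≥ 0) or the class of all linear forests. In other words, complete bipartite graphs and linear forests are the only two minimal hereditary subclasses of bipartite permutation graphs of unbounded path number. -/

import Mathlib

open SimpleGraph

/-- A class of finite graphs, given by a set of graphs on `Fin n` for each `n`. -/
abbrev GClass : Type := ∀ n : ℕ, Set (SimpleGraph (Fin n))

/-- A class is hereditary if it is closed under isomorphism and induced subgraphs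
(i.e. closed under graph embeddings). -/
def Hereditary (X : GClass) : Prop :=
  ∀ (n m : ℕ) (G : SimpleGraph (Fin n)) (H : SimpleGraph (Fin m)),
    G ∈ X n → Nonempty (H ↪g G) → H ∈ X m

/-- A bipartite permutation graph is a letter graph with the path decoder
over some finite alphabet. -/
def IsBPG {V : Type*} [Fintype V] (G : SimpleGraph V) : Prop :=
  ∃ (k : ℕ) (v : Fin (Fintype.card V) ≃ V) (w : Fin (Fintype.card V) → Fin k),
    ∀ i j : Fin (Fintype.card V), i < j →
      (G.Adj (v i) (v j) ↔ (w j : ℕ) = (w i : ℕ) + 1)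

/-- The path number (number of vertices of a longest, not necessarily induced,
path) is bounded on the class `X`. -/
def PathNumBdd (X : GClass) : Prop :=
  ∃ c : ℕ, ∀ n (G : SimpleGraph (Fin n)), G ∈ X n →
    ∀ (u v : Fin n) (p : G.Walk u v), p.IsPath → p.length + 1 ≤ c

/-- `G` is a complete bipartite graph `K_{a,b}` for some `a, b ≥ 0`. -/
def IsCompleteBipartite {V : Type*} (G : SimpleGraph V) : Prop :=
  ∃ a b : ℕ, Nonempty (G ≃g completeBipartiteGraph (Fin a) (Fin b))

/-- A linear forest: every connected component is a path. -/
def IsLinearForest {V : Type*} (G : SimpleGraph V) : Prop :=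
  ∀ c : G.ConnectedComponent, ∃ m, Nonempty (G.induce c.supp ≃g SimpleGraph.pathGraph m)


/-!
In the letter model of a bipartite permutation graph, adjacent vertices carry consecutive letters
(levels), and the one with the smaller letter comes first. If the graph has no induced path on `p`
vertices, then any two vertices of a path `q` are at distance `< p` inside the subgraph induced by
`q`, so `q` meets at most `2p + 1` levels. The edges of `q` between two consecutive levels form two
matchings, and a matching of size `2a`, split at the median position of its lower ends, yields an
induced `K_{a,a}`. So a class excluding some `K_{a,a}` and some `P_p` has bounded path number.

If `X` is minimal unbounded and contained in neither of the two classes, its traces on complete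
bipartite graphs and on linear forests are proper hereditary subclasses, hence bounded, hence `X`
excludes a large biclique and a long path, and is bounded. Conversely, each of the two classes is
forced by long paths: each of its members is an induced subgraph of each of its members with a long
enough path (`K_{a,b}` sits in `K_{c,c}`, a linear forest in a long path), so each of its unbounded
hereditary subclasses is the whole class.
-/

open Finset Function

theorem Finset.exists_le_card_filter_lt_and_le_card_filter_le {ι : Type*} (s : Finset ι)
    (g : ι → ℕ) (hg : Set.InjOn g s) {a : ℕ} (h : 2 * a ≤ #s) :
    ∃ t, a ≤ #{i ∈ s | g i < t} ∧ a ≤ #{i ∈ s | t ≤ g i} := by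
  classical
  have hex : ∃ t, a ≤ #{i ∈ s | g i < t} :=
    ⟨s.sup g + 1, by rw [filter_true_of_mem fun i hi => Nat.lt_succ_of_le (le_sup hi)]; omega⟩
  -- by injectivity, the least such `t` has exactly `a` elements of `s` below it
  have hle : #{i ∈ s | g i < Nat.find hex} ≤ a := by
    rcases hfind : Nat.find hex with _ | t
    · simp
    have hlt : #{i ∈ s | g i < t} < a := not_le.mp (Nat.find_min hex (by omega))
    have hsub : {i ∈ s | g i < t + 1} ⊆ {i ∈ s | g i < t} ∪ {i ∈ s | g i = t} := by
      intro i hi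
      simp only [mem_filter, mem_union] at hi ⊢
      rcases Nat.lt_succ_iff_lt_or_eq.mp hi.2 with h | h
      exacts [.inl ⟨hi.1, h⟩, .inr ⟨hi.1, h⟩]
    have hone : #{i ∈ s | g i = t} ≤ 1 := card_le_one.mpr fun i hi j hj => by
      simp only [mem_filter] at hi hj
      exact hg hi.1 hj.1 (hi.2.trans hj.2.symm)
    have := (card_le_card hsub).trans (card_union_le _ _)
    omega
  refine ⟨Nat.find hex, Nat.find_spec hex, ?_⟩
  have := card_filter_add_card_filter_not (s := s) fun i => g i < Nat.find hex
  simp only [not_lt] at this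
  omega

namespace SimpleGraph

variable {V W α β : Type*} {G : SimpleGraph V} {u v : V}

theorem Walk.le_add_length (f : V → ℕ) (hf : ∀ x y, G.Adj x y → f y ≤ f x + 1)
    (p : G.Walk u v) : f v ≤ f u + p.length := by
  induction p with
  | nil => simp
  | cons h p ih => have := hf _ _ h; rw [length_cons]; omega

theorem pathGraph_isIndContained_pathGraph {k m : ℕ} (h : k ≤ m) : pathGraph k ⊴ pathGraph m :=
  ⟨⟨Fin.castLEEmb h, by simp [pathGraph_adj]⟩⟩

theorem pathGraph_exists_isPath (n : ℕ) :
    ∃ p : (pathGraph (n + 1)).Walk 0 (Fin.last n), p.IsPath ∧ p.length = n := by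
  obtain ⟨p, hp, -⟩ := ((pathGraph_connected n).preconnected 0 (Fin.last n)).exists_path_of_dist
  refine ⟨p, hp, le_antisymm (Nat.lt_succ_iff.mp (by simpa using hp.length_lt)) ?_⟩
  simpa using p.le_add_length Fin.val fun x y h => by rw [pathGraph_adj] at h; omega

theorem exists_isPath_of_pathGraph_isContained {n : ℕ} (h : pathGraph (n + 1) ⊑ G) :
    ∃ (u v : V) (p : G.Walk u v), p.IsPath ∧ p.length = n := by
  obtain ⟨f⟩ := h
  obtain ⟨p, hp, hlen⟩ := pathGraph_exists_isPath n
  exact ⟨_, _, p.map f.toHom, hp.map f.injective, by simp [hlen]⟩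

theorem Walk.pathGraph_isIndContained_of_length_eq_dist (p : G.Walk u v)
    (hp : p.length = G.dist u v) : pathGraph (p.length + 1) ⊴ G := by
  have no_chord : ∀ i j, i + 1 < j → j ≤ p.length → ¬ G.Adj (p.getVert i) (p.getVert j) := by
    intro i j hij hj hadj
    have := G.dist_le ((p.take i).append (.cons hadj (p.drop j)))
    simp only [length_append, take_length, length_cons, drop_length] at this
    omega
  have hinj := (p.isPath_of_length_eq_dist hp).getVert_injOn
  let f : Fin (p.length + 1) ↪ V := ⟨fun i => p.getVert i, fun i j h => Fin.ext <|
    hinj (Set.mem_ofPred.mpr (by omega)) (Set.mem_ofPred.mpr (by omega)) h⟩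
  refine ⟨⟨f, fun {i j} => ?_⟩⟩
  change G.Adj (p.getVert i) (p.getVert j) ↔ _
  rw [pathGraph_adj]
  constructor
  · intro hadj
    rcases lt_trichotomy (i : ℕ) j with h | h | h
    · by_contra
      exact no_chord i j (by omega) (by omega) hadj
    · exact absurd hadj (by rw [h]; exact G.loopless.irrefl _)
    · by_contra
      exact no_chord j i (by omega) (by omega) hadj.symm
  · rintro (h | h)
    · rw [← h]; exact p.adj_getVert_succ (by omega)
    · rw [← h]; exact (p.adj_getVert_succ (by omega)).symm

theorem Reachable.dist_add_one_lt {x y : V} {n : ℕ} (h : G.Reachable x y)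
    (hP : ¬ pathGraph n ⊴ G) : G.dist x y + 1 < n := by
  obtain ⟨p, -, hp⟩ := h.exists_path_of_dist
  by_contra! hle
  exact hP <| (pathGraph_isIndContained_pathGraph (by omega)).trans
    (p.pathGraph_isIndContained_of_length_eq_dist hp)

theorem Walk.IsPath.length_div_two_le_card [Fintype V] {p : G.Walk u v} (hp : p.IsPath)
    (c : V → Bool) (hc : ∀ x y, G.Adj x y → c x ≠ c y) (b : Bool) :
    (p.length + 1) / 2 ≤ #{x | c x = b} := by
  classical
  have hchain : (p.support.map c).IsChain (· ≠ ·) :=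
    (List.isChain_map c).mpr (p.isChain_adj_support.imp fun _ _ h => hc _ _ h)
  calc (p.length + 1) / 2 = (p.support.map c).length / 2 := by simp
    _ ≤ (p.support.map c).count b := hchain.length_div_two_le_count_bool b
    _ = (p.support.filter (c · = b)).toFinset.card := by
      rw [List.toFinset_card_of_nodup (hp.support_nodup.filter _)]
      simp [List.count_eq_length_filter, List.filter_map, Function.comp_def]
      rfl
    _ ≤ #{x | c x = b} := card_le_card fun x => by simp

theorem Walk.exists_mem_support_val_eq {m : ℕ} {i j : Fin m} (p : (pathGraph m).Walk i j)
    {k : ℕ} (hik : i ≤ k) (hkj : k ≤ j) : ∃ x ∈ p.support, (x : ℕ) = k := by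
  induction p with
  | @nil x => exact ⟨x, by simp, by omega⟩
  | @cons i i' j h p ih =>
    rw [pathGraph_adj] at h
    by_cases hk : i' ≤ k
    · obtain ⟨x, hx, rfl⟩ := ih hk hkj
      exact ⟨x, by simp [hx], rfl⟩
    · exact ⟨i, by simp, by omega⟩

/-- The image of `f` is an interval, since a walk in `pathGraph m` skips no vertex. -/
theorem Connected.nonempty_iso_pathGraph [Fintype W] {H : SimpleGraph W} (hH : H.Connected)
    {m : ℕ} (f : H ↪g pathGraph m) : Nonempty (H ≃g pathGraph (Fintype.card W)) := by
  classical
  have := hH.nonempty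
  obtain ⟨x₀, hx₀⟩ := Finite.exists_min fun x => (f x : ℕ)
  have hlt : ∀ x, (f x : ℕ) - f x₀ < Fintype.card W := by
    intro x
    have hsub : Icc (f x₀ : ℕ) (f x) ⊆ univ.image fun y => (f y : ℕ) := by
      intro k hk
      rw [mem_Icc] at hk
      obtain ⟨y, hy, hyk⟩ := ((hH.preconnected x₀ x).some.map f.toHom).exists_mem_support_val_eq
        hk.1 hk.2
      obtain ⟨z, -, rfl⟩ := by simpa using hy
      simpa using ⟨z, hyk⟩
    have := (card_le_card hsub).trans card_image_le
    rw [Nat.card_Icc, card_univ] at this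
    have := hx₀ x
    omega
  let e : W → Fin (Fintype.card W) := fun x => ⟨f x - f x₀, hlt x⟩
  have he : Injective e := fun x y h => f.injective <| Fin.ext <| by
    have := hx₀ x; have := hx₀ y; simp [e, Fin.ext_iff] at h; omega
  refine ⟨⟨Equiv.ofBijective e ((Fintype.bijective_iff_injective_and_card e).mpr ⟨he, by simp⟩),
    fun {x y} => ?_⟩⟩
  have := hx₀ x; have := hx₀ y
  change (pathGraph _).Adj (e x) (e y) ↔ _
  rw [← f.map_rel_iff, pathGraph_adj, pathGraph_adj]
  simp only [e]
  omega

/-- Vertex `x` goes to position `blk x * (K + 1) + idx x`: blocks are separated by gaps. -/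
theorem isIndContained_pathGraph_of_blocks {k K : ℕ} (blk : V → Fin k) (idx : V → ℕ)
    (hidx : ∀ x, idx x < K) (hinj : ∀ x y, blk x = blk y → idx x = idx y → x = y)
    (hadj : ∀ x y, G.Adj x y ↔ blk x = blk y ∧ (idx x + 1 = idx y ∨ idx y + 1 = idx x)) :
    G ⊴ pathGraph (k * (K + 1)) := by
  let pos x : ℕ := blk x * (K + 1) + idx x
  have hgap : ∀ x (b : ℕ), blk x < b → pos x + 2 ≤ b * (K + 1) := fun x b h => by
    have h₁ : ((blk x : ℕ) + 1) * (K + 1) ≤ b * (K + 1) := Nat.mul_le_mul_right _ h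
    rw [add_one_mul] at h₁
    have := hidx x
    simp only [pos]
    omega
  have hgap' : ∀ x y, blk x < blk y → pos x + 2 ≤ pos y := fun x y h => by
    have := hgap x _ h
    simp only [pos] at this ⊢
    omega
  refine ⟨⟨⟨fun x => ⟨pos x, by have := hgap x k (blk x).isLt; omega⟩, fun x y h => ?_⟩,
    fun {x y} => ?_⟩⟩
  · have h : pos x = pos y := congrArg Fin.val h
    rcases lt_trichotomy (blk x) (blk y) with hb | hb | hb
    · have := hgap' x y hb; omega
    · simp only [pos, hb] at h
      exact hinj x y hb (by omega)
    · have := hgap' y x hb; omega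
  · change (pathGraph _).Adj ⟨pos x, _⟩ ⟨pos y, _⟩ ↔ _
    rw [pathGraph_adj, hadj]
    rcases lt_trichotomy (blk x) (blk y) with hb | hb | hb
    · have := hgap' x y hb; simp only [hb.ne, false_and, iff_false]; omega
    · simp only [pos, hb, true_and]; omega
    · have := hgap' y x hb; simp only [hb.ne', false_and, iff_false]; omega

theorem completeBipartiteGraph_adj_iff {x y : α ⊕ β} :
    (completeBipartiteGraph α β).Adj x y ↔ x.isLeft ≠ y.isLeft := by
  cases x <;> cases y <;> simp

theorem pathGraph_isContained_completeBipartiteGraph (k : ℕ) :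
    pathGraph k ⊑ completeBipartiteGraph (Fin k) (Fin k) := by
  let f : Fin (2 * k) → Fin k ⊕ Fin k := fun i =>
    if (i : ℕ) % 2 = 0 then .inl ⟨i / 2, by omega⟩ else .inr ⟨i / 2, by omega⟩
  refine (pathGraph_isIndContained_pathGraph (by omega)).isContained.trans
    ⟨⟨⟨f, fun {i j} h => ?_⟩, fun i j h => ?_⟩⟩
  · rw [pathGraph_adj] at h
    rw [completeBipartiteGraph_adj_iff]
    simp only [f]
    split_ifs <;> simp <;> omega
  · change f i = f j at h
    simp only [f] at h
    split_ifs at h <;> simp [Fin.ext_iff] at h ⊢ <;> omega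

theorem completeBipartiteGraph_isIndContained_of_le {a b a' b' : ℕ} (ha : a ≤ a') (hb : b ≤ b') :
    completeBipartiteGraph (Fin a) (Fin b) ⊴ completeBipartiteGraph (Fin a') (Fin b') :=
  ⟨⟨(Fin.castLEEmb ha).sumMap (Fin.castLEEmb hb), fun {x y} => by cases x <;> cases y <;> simp⟩⟩

theorem Walk.IsPath.length_div_two_le_card_completeBipartiteGraph [Fintype α] [Fintype β]
    {u v : α ⊕ β} {p : (completeBipartiteGraph α β).Walk u v} (hp : p.IsPath) :
    (p.length + 1) / 2 ≤ Fintype.card α ∧ (p.length + 1) / 2 ≤ Fintype.card β := by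
  have hc : ∀ x y, (completeBipartiteGraph α β).Adj x y → x.isLeft ≠ y.isLeft :=
    fun _ _ => completeBipartiteGraph_adj_iff.mp
  have hl : ({x | x.isLeft = true} : Finset (α ⊕ β)) = univ.map .inl := by
    ext x; cases x <;> simp
  have hr : ({x | x.isLeft = false} : Finset (α ⊕ β)) = univ.map .inr := by
    ext x; cases x <;> simp
  have h₁ := hp.length_div_two_le_card _ hc true
  have h₂ := hp.length_div_two_le_card _ hc false
  rw [hl, card_map, card_univ] at h₁
  rw [hr, card_map, card_univ] at h₂
  exact ⟨h₁, h₂⟩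

end SimpleGraph

section CompleteBipartite

variable {V W : Type*}

theorem isCompleteBipartite_of_adj_iff [Fintype V] {G : SimpleGraph V} (c : V → Bool)
    (h : ∀ x y, G.Adj x y ↔ c x ≠ c y) : IsCompleteBipartite G := by
  classical
  let e : V ≃ Fin _ ⊕ Fin _ := (Equiv.sumCompl fun x => c x = true).symm.trans
    ((Fintype.equivFin _).sumCongr (Fintype.equivFin _))
  have he : ∀ x, (e x).isLeft = c x := fun x => by by_cases hx : c x = true <;> simp [e, hx]
  exact ⟨_, _, ⟨e, fun {x y} => by rw [h, completeBipartiteGraph_adj_iff, he, he]⟩⟩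

theorem IsCompleteBipartite.of_isIndContained [Fintype V] {H : SimpleGraph V}
    {G : SimpleGraph W} (hG : IsCompleteBipartite G) (h : H ⊴ G) : IsCompleteBipartite H := by
  obtain ⟨a, b, ⟨e⟩⟩ := hG
  obtain ⟨f⟩ := h
  exact isCompleteBipartite_of_adj_iff (fun x => (e (f x)).isLeft) fun x y => by
    rw [← f.map_rel_iff, ← e.map_rel_iff, completeBipartiteGraph_adj_iff]

end CompleteBipartite

section LinearForest

variable {V : Type*} {G : SimpleGraph V}

theorem IsLinearForest.of_isIndContained_pathGraph [Fintype V] {M : ℕ} (h : G ⊴ pathGraph M) :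
    IsLinearForest G := by
  classical
  obtain ⟨f⟩ := h
  exact fun C => ⟨_, C.connected_toSimpleGraph.nonempty_iso_pathGraph
    (f.comp (Embedding.induce C.supp))⟩

theorem IsLinearForest.exists_isIndContained_pathGraph [Fintype V] (hG : IsLinearForest G) :
    ∃ M, G ⊴ pathGraph M := by
  classical
  choose m hφ using hG
  let φ C := (hφ C).some
  let idx x : ℕ := φ (G.connectedComponentMk x) ⟨x, rfl⟩
  have idx_eq : ∀ x C (h : G.connectedComponentMk x = C), idx x = φ C ⟨x, h⟩ := by
    rintro x _ rfl; rfl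
  refine ⟨_, isIndContained_pathGraph_of_blocks (Fintype.equivFin _ ∘ G.connectedComponentMk) idx
    (K := Fintype.card V) (fun x => ?_) (fun x y hb hi => ?_) (fun x y => ?_)⟩
  · let C := G.connectedComponentMk x
    have hm := Fintype.card_le_of_injective (fun i => ((φ C).symm i : V))
      (Subtype.val_injective.comp (φ C).symm.injective)
    rw [Fintype.card_fin] at hm
    exact (φ C ⟨x, rfl⟩).isLt.trans_le hm
  · have hC : G.connectedComponentMk y = G.connectedComponentMk x :=
      ((Fintype.equivFin _).injective hb).symm
    rw [idx_eq y _ hC] at hi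
    exact congrArg Subtype.val ((φ _).injective (Fin.ext hi))
  · simp only [Function.comp_apply, EmbeddingLike.apply_eq_iff_eq]
    constructor
    · intro h
      have hC := (ConnectedComponent.connectedComponentMk_eq_of_adj h).symm
      rw [idx_eq y _ hC, ← pathGraph_adj]
      exact ⟨hC.symm, (φ _).map_rel_iff.mpr h⟩
    · rintro ⟨hC, h⟩
      rw [idx_eq y _ hC.symm, ← pathGraph_adj] at h
      exact (φ _).map_rel_iff.mp h

/-- The copy spans a connected subgraph, induced in a path since `G` is, hence itself a path. -/
theorem IsLinearForest.pathGraph_isIndContained [Fintype V] (hG : IsLinearForest G) {M : ℕ}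
    (h : pathGraph M ⊑ G) : pathGraph M ⊴ G := by
  classical
  obtain ⟨N, ⟨g⟩⟩ := hG.exists_isIndContained_pathGraph
  obtain ⟨f⟩ := h
  cases M with
  | zero => exact IsIndContained.of_isEmpty
  | succ n =>
    let S := Set.range f
    let f' : pathGraph (n + 1) →g G.induce S := ⟨fun i => ⟨f i, i, rfl⟩, fun h => f.toHom.map_adj h⟩
    have hS := (pathGraph_connected n).map f' (by rintro ⟨_, i, rfl⟩; exact ⟨i, rfl⟩)
    obtain ⟨e⟩ := hS.nonempty_iso_pathGraph (g.comp (Embedding.induce S))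
    have hcard : n + 1 ≤ Fintype.card S := by
      simpa using Fintype.card_le_of_injective f' fun i j h => f.injective (congrArg Subtype.val h)
    exact (pathGraph_isIndContained_pathGraph hcard).trans
      ⟨(Embedding.induce S).comp e.symm.toEmbedding⟩

end LinearForest

section BPG

variable {V W : Type*} {G : SimpleGraph V} {u v : V}

/-- `IsBPG` unpacked: the vertex `x` is `v_(pos x)` and carries the letter `level x = w (pos x)`. -/
structure BPGModel (G : SimpleGraph V) where
  pos : V → ℕ
  level : V → ℕ
  pos_injective : Injective pos
  adj_iff : ∀ x y, G.Adj x y ↔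
    pos x < pos y ∧ level y = level x + 1 ∨ pos y < pos x ∧ level x = level y + 1

theorem IsBPG.nonempty_bpgModel [Fintype V] (h : IsBPG G) : Nonempty (BPGModel G) := by
  obtain ⟨k, v, w, hvw⟩ := h
  refine ⟨⟨fun x => v.symm x, fun x => w (v.symm x), Fin.val_injective.comp v.symm.injective,
    fun x y => ?_⟩⟩
  rcases lt_trichotomy (v.symm x) (v.symm y) with h | h | h
  · have := hvw _ _ h
    simp only [Equiv.apply_symm_apply] at this
    rw [Fin.lt_def] at h
    rw [this]
    omega
  · rw [v.symm.injective h]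
    simp
  · have := hvw _ _ h
    simp only [Equiv.apply_symm_apply] at this
    rw [Fin.lt_def] at h
    rw [G.adj_comm, this]
    omega

namespace BPGModel

variable (M : BPGModel G)

theorem level_eq_of_adj {x y : V} (h : G.Adj x y) :
    M.level y = M.level x + 1 ∨ M.level x = M.level y + 1 := by
  rw [M.adj_iff] at h
  omega

theorem pos_lt_of_adj {x y : V} (h : G.Adj x y) (hxy : M.level y = M.level x + 1) :
    M.pos x < M.pos y := by
  rw [M.adj_iff] at h
  omega

def comap {H : SimpleGraph W} (f : H ↪g G) : BPGModel H where
  pos := M.pos ∘ f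
  level := M.level ∘ f
  pos_injective := M.pos_injective.comp f.injective
  adj_iff x y := by simp only [← f.map_rel_iff, M.adj_iff, Function.comp_apply]

/-- A shortest path inside the subgraph induced by `q` is an induced path of `G`, and the level
changes by one along each of its edges. -/
theorem level_le_of_mem_support {p : ℕ} (hP : ¬ pathGraph p ⊴ G) (q : G.Walk u v) {x : V}
    (hx : x ∈ q.support) : M.level x ≤ M.level u + p ∧ M.level u ≤ M.level x + p := by
  let s : Set V := {y | y ∈ q.support}
  have hPs : ¬ pathGraph p ⊴ G.induce s := fun h => hP (h.trans ⟨Embedding.induce s⟩)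
  have hr := q.connected_induce_support.preconnected ⟨u, q.start_mem_support⟩ ⟨x, hx⟩
  have hd := hr.dist_add_one_lt hPs
  obtain ⟨w, -, hw⟩ := hr.exists_path_of_dist
  let Ms := M.comap (Embedding.induce s)
  have hlip : ∀ y z, (G.induce s).Adj y z → Ms.level z ≤ Ms.level y + 1 := fun y z h => by
    have := Ms.level_eq_of_adj h
    omega
  have h₁ := w.le_add_length Ms.level hlip
  have h₂ := w.reverse.le_add_length Ms.level hlip
  simp only [Walk.length_reverse] at h₂
  change M.level x ≤ M.level u + w.length at h₁
  change M.level u ≤ M.level x + w.length at h₂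
  omega

theorem completeBipartiteGraph_isIndContained {a ℓ : ℕ} {A B : Finset V} (hA : a ≤ #A)
    (hB : a ≤ #B) (hAℓ : ∀ x ∈ A, M.level x = ℓ) (hBℓ : ∀ y ∈ B, M.level y = ℓ + 1)
    (hAB : ∀ x ∈ A, ∀ y ∈ B, M.pos x < M.pos y) :
    completeBipartiteGraph (Fin a) (Fin a) ⊴ G := by
  obtain ⟨eA⟩ := Function.Embedding.nonempty_of_card_le (α := Fin a) (β := A) (by simpa using hA)
  obtain ⟨eB⟩ := Function.Embedding.nonempty_of_card_le (α := Fin a) (β := B) (by simpa using hB)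
  have hlA : ∀ i, M.level (eA i) = ℓ := fun i => hAℓ _ (eA i).2
  have hlB : ∀ j, M.level (eB j) = ℓ + 1 := fun j => hBℓ _ (eB j).2
  have hpos : ∀ i j, M.pos (eA i) < M.pos (eB j) := fun i j => hAB _ (eA i).2 _ (eB j).2
  refine ⟨⟨⟨Sum.elim (fun i => eA i) (fun j => eB j), ?_⟩, fun {s t} => ?_⟩⟩
  · refine (Subtype.val_injective.comp eA.injective).sumElim
      (Subtype.val_injective.comp eB.injective) fun i j h => ?_
    have := hlA i
    have := hlB j
    simp_all
  · rcases s with i | i <;> rcases t with j | j <;>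
      simp only [Function.Embedding.coeFn_mk, Sum.elim_inl, Sum.elim_inr, M.adj_iff,
        completeBipartiteGraph_adj_iff, Sum.isLeft_inl, Sum.isLeft_inr, ne_eq, hlA, hlB]
    · simp
    · have := hpos i j; simp; omega
    · have := hpos j i; simp; omega
    · simp

theorem card_lt_of_matching {a ℓ : ℕ} (hK : ¬ completeBipartiteGraph (Fin a) (Fin a) ⊴ G)
    {ι : Type*} (s : Finset ι) (lo hi : ι → V) (hlo : ∀ i ∈ s, M.level (lo i) = ℓ)
    (hhi : ∀ i ∈ s, M.level (hi i) = ℓ + 1) (hadj : ∀ i ∈ s, G.Adj (lo i) (hi i))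
    (hlo_inj : Set.InjOn lo s) (hhi_inj : Set.InjOn hi s) : #s < 2 * a := by
  classical
  by_contra! hs
  obtain ⟨t, ht₁, ht₂⟩ := s.exists_le_card_filter_lt_and_le_card_filter_le (M.pos ∘ lo)
    (M.pos_injective.comp_injOn hlo_inj) hs
  refine hK (M.completeBipartiteGraph_isIndContained (ℓ := ℓ)
    (A := {i ∈ s | M.pos (lo i) < t}.image lo) (B := {i ∈ s | t ≤ M.pos (lo i)}.image hi)
    ?_ ?_ ?_ ?_ ?_)
  · rwa [card_image_of_injOn (hlo_inj.mono (filter_subset _ _))]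
  · rwa [card_image_of_injOn (hhi_inj.mono (filter_subset _ _))]
  · simp only [mem_image, mem_filter]
    rintro _ ⟨i, ⟨hi, -⟩, rfl⟩
    exact hlo i hi
  · simp only [mem_image, mem_filter]
    rintro _ ⟨i, ⟨hi, -⟩, rfl⟩
    exact hhi i hi
  · simp only [mem_image, mem_filter]
    rintro _ ⟨i, ⟨-, hit⟩, rfl⟩ _ ⟨j, ⟨hj, hjt⟩, rfl⟩
    have := M.pos_lt_of_adj (hadj j hj) (by rw [hlo j hj, hhi j hj])
    omega

/-- The edges of `q` between levels `ℓ` and `ℓ + 1` form two matchings (those climbing and those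
descending along `q`), and every edge of `q` has its lower end in a window of `2p + 1` levels. -/
theorem length_le (M : BPGModel G) {a p : ℕ} (hK : ¬ completeBipartiteGraph (Fin a) (Fin a) ⊴ G)
    (hP : ¬ pathGraph p ⊴ G) {q : G.Walk u v} (hq : q.IsPath) :
    q.length ≤ (2 * p + 1) * (4 * a) := by
  classical
  let x i := q.getVert i
  let up ℓ : Finset ℕ := {i ∈ range q.length | M.level (x i) = ℓ ∧ M.level (x (i + 1)) = ℓ + 1}
  let down ℓ : Finset ℕ :=
    {i ∈ range q.length | M.level (x (i + 1)) = ℓ ∧ M.level (x i) = ℓ + 1}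
  have hinj : ∀ d ≤ 1, Set.InjOn (fun i => x (i + d)) (range q.length) := fun d hd i hi j hj h => by
    simp only [coe_range, Set.mem_Iio] at hi hj
    have := hq.getVert_injOn (Set.mem_ofPred.mpr (by omega)) (Set.mem_ofPred.mpr (by omega)) h
    omega
  have hup : ∀ ℓ, #(up ℓ) < 2 * a := fun ℓ =>
    M.card_lt_of_matching hK _ x (fun i => x (i + 1)) (fun i hi => (mem_filter.mp hi).2.1)
      (fun i hi => (mem_filter.mp hi).2.2)
      (fun i hi => q.adj_getVert_succ (by simpa using (mem_filter.mp hi).1))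
      ((hinj 0 zero_le_one).mono (filter_subset _ _)) ((hinj 1 le_rfl).mono (filter_subset _ _))
  have hdown : ∀ ℓ, #(down ℓ) < 2 * a := fun ℓ =>
    M.card_lt_of_matching hK _ (fun i => x (i + 1)) x (fun i hi => (mem_filter.mp hi).2.1)
      (fun i hi => (mem_filter.mp hi).2.2)
      (fun i hi => (q.adj_getVert_succ (by simpa using (mem_filter.mp hi).1)).symm)
      ((hinj 1 le_rfl).mono (filter_subset _ _)) ((hinj 0 zero_le_one).mono (filter_subset _ _))
  have hcover : range q.length ⊆
      (Icc (M.level u - p) (M.level u + p)).biUnion fun ℓ => up ℓ ∪ down ℓ := by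
    intro i hi
    have h₀ := M.level_le_of_mem_support hP q (q.getVert_mem_support i)
    have h₁ := M.level_le_of_mem_support hP q (q.getVert_mem_support (i + 1))
    rcases M.level_eq_of_adj (q.adj_getVert_succ (mem_range.mp hi)) with h | h
    · exact mem_biUnion.mpr ⟨M.level (q.getVert i), mem_Icc.mpr ⟨by omega, by omega⟩,
        mem_union_left _ (mem_filter.mpr ⟨hi, rfl, h⟩)⟩
    · exact mem_biUnion.mpr ⟨M.level (q.getVert (i + 1)), mem_Icc.mpr ⟨by omega, by omega⟩,
        mem_union_right _ (mem_filter.mpr ⟨hi, rfl, h⟩)⟩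
  calc q.length = #(range q.length) := (card_range _).symm
    _ ≤ ∑ ℓ ∈ Icc (M.level u - p) (M.level u + p), #(up ℓ ∪ down ℓ) :=
      (card_le_card hcover).trans card_biUnion_le
    _ ≤ ∑ ℓ ∈ Icc (M.level u - p) (M.level u + p), 4 * a :=
      sum_le_sum fun ℓ _ => (card_union_le _ _).trans (by have := hup ℓ; have := hdown ℓ; omega)
    _ ≤ (2 * p + 1) * (4 * a) := by
      rw [sum_const, smul_eq_mul, Nat.card_Icc]
      exact Nat.mul_le_mul_right _ (by omega)

end BPGModel

end BPG

theorem pathNumBdd_iff {X : GClass} :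
    PathNumBdd X ↔ ∃ c, ∀ n, ∀ G ∈ X n, ¬ pathGraph c ⊑ G := by
  constructor
  · rintro ⟨c, hc⟩
    refine ⟨c + 1, fun n G hG h => ?_⟩
    obtain ⟨u, v, p, hp, hlen⟩ := exists_isPath_of_pathGraph_isContained h
    have := hc n G hG u v p hp
    omega
  · rintro ⟨c, hc⟩
    refine ⟨c, fun n G hG u v p hp => ?_⟩
    by_contra! hlt
    exact hc n G hG
      ((pathGraph_isIndContained_pathGraph hlt.le).isContained.trans hp.isContained_pathGraph)

theorem Hereditary.inter {X Z : GClass} (hX : Hereditary X) (hZ : Hereditary Z) :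
    Hereditary fun n => X n ∩ Z n :=
  fun n m G H hG hHG => ⟨hX n m G H hG.1 hHG, hZ n m G H hG.2 hHG⟩

theorem PathNumBdd.exists_not_isIndContained {X Z : GClass} (hX : Hereditary X)
    (h : PathNumBdd fun n => X n ∩ Z n) :
    ∃ c, ∀ {W : Type} [Fintype W] (H : SimpleGraph W),
      (∀ m (H' : SimpleGraph (Fin m)), Nonempty (H' ≃g H) → H' ∈ Z m) → pathGraph c ⊑ H →
      ∀ n, ∀ G ∈ X n, ¬ H ⊴ G := by
  obtain ⟨c, hc⟩ := pathNumBdd_iff.mp h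
  refine ⟨c, fun {W} _ H hZ hcH n G hG ⟨f⟩ => ?_⟩
  let e := Iso.comap (Fintype.equivFin W).symm H
  exact hc _ _ ⟨hX n _ G _ hG ⟨f.comp e.toEmbedding⟩, hZ _ _ ⟨e⟩⟩
    (hcH.trans e.symm.isContained)

def ForcedByLongPaths (Z : GClass) : Prop :=
  ∀ n, ∀ G ∈ Z n, ∃ c, ∀ m, ∀ H ∈ Z m, pathGraph c ⊑ H → G ⊴ H

theorem ForcedByLongPaths.eq_of_subset {X Z : GClass} (hZ : ForcedByLongPaths Z)
    (hX : Hereditary X) (hXZ : ∀ n, X n ⊆ Z n) (hX_unbdd : ¬ PathNumBdd X) : X = Z := by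
  rw [pathNumBdd_iff] at hX_unbdd
  push Not at hX_unbdd
  funext n
  refine (hXZ n).antisymm fun G hG => ?_
  obtain ⟨c, hc⟩ := hZ n G hG
  obtain ⟨m, H, hH, hcH⟩ := hX_unbdd c
  exact hX m n H G hH (hc m H (hXZ m hH) hcH)

theorem ForcedByLongPaths.minimal {Z : GClass} (hZ : ForcedByLongPaths Z)
    (hZ_unbdd : ¬ PathNumBdd Z) :
    ¬ PathNumBdd Z ∧ ∀ Y : GClass, Hereditary Y → (∀ n, Y n ⊆ Z n) → Y ≠ Z → PathNumBdd Y :=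
  ⟨hZ_unbdd, fun _ hY hYZ hne => by_contra fun h => hne (hZ.eq_of_subset hY hYZ h)⟩

def completeBipartiteClass : GClass := fun _ => {G | IsCompleteBipartite G}

theorem hereditary_completeBipartiteClass : Hereditary completeBipartiteClass :=
  fun _ _ _ _ hG hHG => IsCompleteBipartite.of_isIndContained hG hHG

theorem not_pathNumBdd_completeBipartiteClass : ¬ PathNumBdd completeBipartiteClass := by
  rw [pathNumBdd_iff]
  push Not
  intro c
  let e := Iso.comap (Fintype.equivFin _).symm (completeBipartiteGraph (Fin c) (Fin c))
  exact ⟨_, _, ⟨c, c, ⟨e⟩⟩, (pathGraph_isContained_completeBipartiteGraph c).trans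
    e.symm.isContained⟩

theorem forcedByLongPaths_completeBipartiteClass : ForcedByLongPaths completeBipartiteClass := by
  rintro n G ⟨a, b, ⟨e⟩⟩
  refine ⟨2 * (a + b) + 1 + 1, fun m H ⟨a', b', ⟨e'⟩⟩ hH => ?_⟩
  obtain ⟨u, v, p, hp, hlen⟩ := exists_isPath_of_pathGraph_isContained (hH.trans e'.isContained)
  obtain ⟨ha', hb'⟩ := hp.length_div_two_le_card_completeBipartiteGraph
  simp only [Fintype.card_fin] at ha' hb'
  obtain ⟨f⟩ := completeBipartiteGraph_isIndContained_of_le (a := a) (b := b) (a' := a') (b' := b')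
    (by omega) (by omega)
  exact ⟨e'.symm.toEmbedding.comp (f.comp e.toEmbedding)⟩

def linearForestClass : GClass := fun _ => {G | IsLinearForest G}

theorem hereditary_linearForestClass : Hereditary linearForestClass := fun _ _ _ _ hG hHG =>
  have ⟨_, hM⟩ := IsLinearForest.exists_isIndContained_pathGraph hG
  IsLinearForest.of_isIndContained_pathGraph (IsIndContained.trans hHG hM)

theorem not_pathNumBdd_linearForestClass : ¬ PathNumBdd linearForestClass := by
  rw [pathNumBdd_iff]
  push Not
  exact fun c => ⟨c, pathGraph c, IsLinearForest.of_isIndContained_pathGraph .rfl, .rfl⟩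

theorem forcedByLongPaths_linearForestClass : ForcedByLongPaths linearForestClass := by
  intro n G hG
  obtain ⟨M, hM⟩ := IsLinearForest.exists_isIndContained_pathGraph hG
  exact ⟨M, fun m H hH hMH => hM.trans (IsLinearForest.pathGraph_isIndContained hH hMH)⟩

theorem pathNumBdd_of_isBPG {X : GClass} (hBP : ∀ n, ∀ G ∈ X n, IsBPG G) {a p : ℕ}
    (hK : ∀ n, ∀ G ∈ X n, ¬ completeBipartiteGraph (Fin a) (Fin a) ⊴ G)
    (hP : ∀ n, ∀ G ∈ X n, ¬ pathGraph p ⊴ G) : PathNumBdd X := by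
  refine ⟨(2 * p + 1) * (4 * a) + 1, fun n G hG u v q hq => ?_⟩
  obtain ⟨M⟩ := (hBP n G hG).nonempty_bpgModel
  have := M.length_le (hK n G hG) (hP n G hG) hq
  omega

/-- Complete bipartite graphs and linear forests are the only two minimal
hereditary subclasses of bipartite permutation graphs of unbounded path number. -/
theorem path_number_minimal_classes (X : GClass) (hX : Hereditary X)
    (hBP : ∀ n (G : SimpleGraph (Fin n)), G ∈ X n → IsBPG G) :
    (¬ PathNumBdd X ∧
      ∀ Y : GClass, Hereditary Y → (∀ n, Y n ⊆ X n) → Y ≠ X → PathNumBdd Y) ↔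
    ((∀ n, X n = {G | IsCompleteBipartite G}) ∨
      (∀ n, X n = {G | IsLinearForest G})) := by
  constructor
  · rintro ⟨hX_unbdd, hX_min⟩
    by_cases hCB : ∀ n, X n ⊆ completeBipartiteClass n
    · exact .inl (congrFun (forcedByLongPaths_completeBipartiteClass.eq_of_subset hX hCB hX_unbdd))
    by_cases hLF : ∀ n, X n ⊆ linearForestClass n
    · exact .inr (congrFun (forcedByLongPaths_linearForestClass.eq_of_subset hX hLF hX_unbdd))
    have hne : ∀ Z : GClass, ¬ (∀ n, X n ⊆ Z n) → (fun n => X n ∩ Z n) ≠ X :=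
      fun Z hXZ h => hXZ fun n => h ▸ Set.inter_subset_right
    obtain ⟨a, ha⟩ := (hX_min _ (hX.inter hereditary_completeBipartiteClass)
      (fun n => Set.inter_subset_left) (hne _ hCB)).exists_not_isIndContained hX
    obtain ⟨p, hp⟩ := (hX_min _ (hX.inter hereditary_linearForestClass)
      (fun n => Set.inter_subset_left) (hne _ hLF)).exists_not_isIndContained hX
    refine absurd (pathNumBdd_of_isBPG hBP (a := a) (p := p) ?_ ?_) hX_unbdd
    · exact ha _ (fun _ _ ⟨e⟩ => ⟨a, a, ⟨e⟩⟩) (pathGraph_isContained_completeBipartiteGraph a)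
    · exact hp _ (fun _ _ ⟨e⟩ => IsLinearForest.of_isIndContained_pathGraph ⟨e.toEmbedding⟩) .rfl
  · rintro (h | h) <;> obtain rfl : X = _ := funext h
    · exact forcedByLongPaths_completeBipartiteClass.minimal not_pathNumBdd_completeBipartiteClass
    · exact forcedByLongPaths_linearForestClass.minimal not_pathNumBdd_linearForestClass
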